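/- arXiv:1910.10412 — 3 statements merged into one kernel-verified Lean document; each statement's English description precedes it below -/
import Mathlib

section
/- Let G be a finite connected Helly graph. Then for any vertex v of G and any farthest vertex u ∈ F(v), the slice L(u, rad(G), v) has nonempty intersection with the center C(G), i.e., L(u, rad(G), v) ∩ C(G) ≠ ∅. -/
open SimpleGraph

variable {V : Type*}

/-- The ball of radius `r` centered at `v`. -/
def gBall (G : SimpleGraph V) (v : V) (r : ℕ) : Set V := {u | G.dist v u ≤ r}

/-- A graph is Helly if every (nonempty) family of pairwise intersecting balls
has a nonempty common intersection. -/
def IsHelly (G : SimpleGraph V) : Prop :=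
  ∀ F : Set (V × ℕ), F.Nonempty →
    (∀ p ∈ F, ∀ q ∈ F, (gBall G p.1 p.2 ∩ gBall G q.1 q.2).Nonempty) →
    (⋂ p ∈ F, gBall G p.1 p.2).Nonempty

/-- The eccentricity of a vertex. -/
noncomputable def ecc (G : SimpleGraph V) [Fintype V] (v : V) : ℕ :=
  Finset.univ.sup (fun u => G.dist v u)

/-- The radius of a graph. -/
noncomputable def grad (G : SimpleGraph V) [Fintype V] : ℕ :=
  sInf (Set.range (ecc G))

/-- The diameter of a graph. -/
noncomputable def gdiam (G : SimpleGraph V) [Fintype V] : ℕ :=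
  Finset.univ.sup (ecc G)

/-- The center of a graph: vertices of minimum eccentricity. -/
noncomputable def gcenter (G : SimpleGraph V) [Fintype V] : Set V :=
  {v | ecc G v = grad G}

/-- Distance from a vertex to a set of vertices. -/
noncomputable def distS (G : SimpleGraph V) (v : V) (S : Set V) : ℕ :=
  sInf (G.dist v '' S)

/-- The metric projection of a vertex onto a set of vertices. -/
noncomputable def proj (G : SimpleGraph V) (v : V) (S : Set V) : Set V :=
  {s ∈ S | G.dist v s = distS G v S}

/-- The slice `L(u,k,v)`: vertices on the metric interval from `u` to `v`
at distance `k` from `u`. -/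
def gslice (G : SimpleGraph V) (u : V) (k : ℕ) (v : V) : Set V :=
  {w | G.dist u w = k ∧ G.dist u w + G.dist w v = G.dist u v}

/-- A graph is `C₄`-free if it has no induced cycle on four vertices. -/
def C4Free (G : SimpleGraph V) : Prop :=
  ¬ ∃ a b c d : V, a ≠ b ∧ a ≠ c ∧ a ≠ d ∧ b ≠ c ∧ b ≠ d ∧ c ≠ d ∧
    G.Adj a b ∧ G.Adj b c ∧ G.Adj c d ∧ G.Adj d a ∧ ¬ G.Adj a c ∧ ¬ G.Adj b d

/-- The open neighbourhood of a set: vertices outside it with a neighbour in it. -/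
def nbhdSet (G : SimpleGraph V) (C : Set V) : Set V :=
  {v | v ∉ C ∧ ∃ c ∈ C, G.Adj v c}

/-!
Apply the Helly property to the balls `N^r[x]` for all vertices `x`, where `r = rad(G)`, together
with `N^(e(v) - r)[v]`. Two balls of radius `r` meet in any central vertex, and `N^r[x]` meets
`N^(e(v) - r)[v]` on a shortest `v`–`x` path because `d(v, x) ≤ e(v)`. A common point `w` then
has `e(w) ≤ r`, so it is central, and `d(u, w) ≤ r`, `d(w, v) ≤ e(v) - r` together with
`d(u, v) = e(v)` force `w` onto the slice `L(u, r, v)`.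
-/

variable {G : SimpleGraph V}

lemma mem_gBall_comm {x y : V} {r : ℕ} : x ∈ gBall G y r ↔ y ∈ gBall G x r := by
  show G.dist y x ≤ r ↔ G.dist x y ≤ r
  rw [G.dist_comm]

lemma SimpleGraph.Connected.gBall_inter_nonempty (hconn : G.Connected) {x y : V} {a b : ℕ}
    (h : G.dist x y ≤ a + b) : (gBall G x a ∩ gBall G y b).Nonempty := by
  obtain ⟨p, hp⟩ := hconn.exists_walk_length_eq_dist x y
  refine ⟨p.getVert a, ?_, mem_gBall_comm.mp ?_⟩
  · exact (dist_le (p.take a)).trans (by simp [Walk.take_length])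
  · exact (dist_le (p.drop a)).trans (by rw [Walk.drop_length]; omega)

section Eccentricity

variable [Fintype V]

lemma dist_le_ecc (x y : V) : G.dist x y ≤ ecc G x :=
  Finset.le_sup (f := fun y => G.dist x y) (Finset.mem_univ y)

lemma ecc_le_of_forall_dist_le {x : V} {r : ℕ} (h : ∀ y, G.dist x y ≤ r) : ecc G x ≤ r :=
  Finset.sup_le fun y _ => h y

lemma grad_le_ecc (x : V) : grad G ≤ ecc G x :=
  Nat.sInf_le ⟨x, rfl⟩

lemma exists_ecc_eq_grad [Nonempty V] : ∃ c : V, ecc G c = grad G :=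
  Nat.sInf_mem (Set.range_nonempty _)

lemma mem_gcenter_of_forall_dist_le {w : V} (h : ∀ y, G.dist w y ≤ grad G) :
    w ∈ gcenter G :=
  (ecc_le_of_forall_dist_le h).antisymm (grad_le_ecc w)

lemma IsHelly.exists_mem_gcenter_dist_le (hconn : G.Connected) (hH : IsHelly G) (v : V) :
    ∃ w ∈ gcenter G, G.dist v w ≤ ecc G v - grad G := by
  have : Nonempty V := ⟨v⟩
  obtain ⟨c, hc⟩ := exists_ecc_eq_grad (G := G)
  set r := grad G
  let F : Set (V × ℕ) := Set.range (fun x => (x, r)) ∪ {(v, ecc G v - r)}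
  have hball_r : ∀ x, c ∈ gBall G x r := fun x => mem_gBall_comm.mp (hc ▸ dist_le_ecc c x)
  have hball_v : ∀ x, (gBall G v (ecc G v - r) ∩ gBall G x r).Nonempty := fun x =>
    hconn.gBall_inter_nonempty <| (dist_le_ecc v x).trans (Nat.sub_add_cancel (grad_le_ecc v)).ge
  have hpair : ∀ p ∈ F, ∀ q ∈ F, (gBall G p.1 p.2 ∩ gBall G q.1 q.2).Nonempty := by
    rintro p (⟨x, rfl⟩ | rfl) q (⟨y, rfl⟩ | rfl)
    · exact ⟨c, hball_r x, hball_r y⟩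
    · exact Set.inter_comm _ _ ▸ hball_v x
    · exact hball_v y
    · exact hconn.gBall_inter_nonempty (by simp)
  obtain ⟨w, hw⟩ := hH F ⟨_, Or.inr rfl⟩ hpair
  simp only [Set.mem_iInter] at hw
  refine ⟨w, mem_gcenter_of_forall_dist_le fun y => ?_, hw _ (Or.inr rfl)⟩
  exact mem_gBall_comm.mp (hw (y, r) (Or.inl ⟨y, rfl⟩))

end Eccentricity

/-- In a finite connected Helly graph, for any vertex `v` and any
farthest vertex `u ∈ F(v)`, the slice `L(u, rad(G), v)` intersects the center. -/
theorem stmt1 (G : SimpleGraph V) [Fintype V] (hconn : G.Connected) (hH : IsHelly G)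
    (v u : V) (hu : G.dist u v = ecc G v) :
    (gslice G u (grad G) v ∩ gcenter G).Nonempty := by
  obtain ⟨w, hw, hvw⟩ := hH.exists_mem_gcenter_dist_le hconn v
  have huw : G.dist u w ≤ grad G := G.dist_comm.trans_le ((dist_le_ecc w u).trans_eq hw)
  have hwv : G.dist w v ≤ ecc G v - grad G := G.dist_comm.trans_le hvw
  have htri : G.dist u v ≤ G.dist u w + G.dist w v := hconn.dist_triangle
  have hrad : grad G ≤ ecc G v := grad_le_ecc v
  exact ⟨w, ⟨by omega, by omega⟩, hw⟩
end

section
/- Let u and w be two vertices in a finite connected C4-free Helly graph G such that dist(u,w) = 2r − 2 for some integer r ≥ 1, let C = L(u, r−1, w), and let S ⊆ N(C) be a stable set. Then the induced subgraph H = G[C ∪ S] is a split Helly graph: its vertex set partitions into the clique C and the stable set S, and every family of pairwise intersecting balls of H has a nonempty common intersection. -/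
open SimpleGraph

variable {V : Type*}

/-!
Write `k = r - 1`, so that `C = L(u, k, w)` is the intersection of the balls `N^k[u]` and `N^k[w]`.
If `x, y ∈ C` are at distance `2`, the Helly property applied to `N^1[x], N^1[y], N^(k-1)[u]`, and to
the same balls with `w` in place of `u`, yields common neighbours `a`, `b` of `x` and `y` with
`dist(u, a) < k` and `dist(w, b) < k`; as `dist(u, w) = 2k`, the vertices `a` and `b` are distinct and
non-adjacent, so `x a y b` is an induced `C₄`. At a larger distance `d`, the balls `N^(d-1)[x], N^1[y],
N^k[u], N^k[w]` meet in a vertex of `C` at distance `d - 1` from `x`; hence `C` is a clique.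

In `H`, a ball of positive radius contains all of `C` unless it is `N^1[s]` with `s ∈ S`. The Helly
property of `G`, applied to these balls together with `N^k[u]` and `N^k[w]`, gives a vertex of `C`
adjacent to all their centres, which lies in every ball of the family.
-/

section Metric

variable {G : SimpleGraph V} {x y : V}

lemma SimpleGraph.Connected.exists_dist_le_and_dist_le_sub (hconn : G.Connected) (x y : V)
    (i : ℕ) : ∃ z, G.dist x z ≤ i ∧ G.dist z y ≤ G.dist x y - i := by
  obtain ⟨p, hp⟩ := hconn.exists_walk_length_eq_dist x y
  refine ⟨p.getVert i, (dist_le (p.take i)).trans ?_, (dist_le (p.drop i)).trans ?_⟩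
  · simp [Walk.take_length]
  · simp [Walk.drop_length, hp]

lemma SimpleGraph.Reachable.dist_le_one_iff (h : G.Reachable x y) :
    G.dist x y ≤ 1 ↔ G.Adj x y ∨ x = y := by
  rw [← edist_le_one_iff_adj_or_eq, ← h.coe_dist_eq_edist, Nat.cast_le_one]

lemma SimpleGraph.Connected.adj_of_dist_le_one (hconn : G.Connected) (h : G.dist x y ≤ 1)
    (hne : x ≠ y) : G.Adj x y :=
  ((hconn.preconnected x y).dist_le_one_iff.mp h).resolve_right hne

lemma gBall_inter_nonempty_iff (hconn : G.Connected) {r s : ℕ} :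
    (gBall G x r ∩ gBall G y s).Nonempty ↔ G.dist x y ≤ r + s := by
  constructor
  · rintro ⟨z, hxz, hyz⟩
    have := hconn.dist_triangle (u := x) (v := z) (w := y)
    rw [dist_comm (u := z)] at this
    exact this.trans (add_le_add hxz hyz)
  · intro h
    obtain ⟨z, hxz, hzy⟩ := hconn.exists_dist_le_and_dist_le_sub x y r
    exact ⟨z, hxz, show G.dist y z ≤ s by rw [dist_comm]; omega⟩

lemma IsHelly.exists_forall_dist_le (hH : IsHelly G) (hconn : G.Connected) {F : Set (V × ℕ)}
    (hF : F.Nonempty) (hpair : ∀ p ∈ F, ∀ q ∈ F, G.dist p.1 q.1 ≤ p.2 + q.2) :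
    ∃ z, ∀ p ∈ F, G.dist p.1 z ≤ p.2 := by
  obtain ⟨z, hz⟩ := hH F hF fun p hp q hq => (gBall_inter_nonempty_iff hconn).mpr (hpair p hp q hq)
  exact ⟨z, Set.mem_iInter₂.mp hz⟩

lemma IsHelly.exists_adj_adj_dist_lt (hH : IsHelly G) (hconn : G.Connected) {c : V} {k : ℕ}
    (hxy : G.dist x y = 2) (hcx : G.dist c x ≤ k) (hcy : G.dist c y ≤ k) :
    ∃ a, G.Adj x a ∧ G.Adj y a ∧ G.dist c a < k := by
  have hxyc := hconn.dist_triangle (u := x) (v := c) (w := y)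
  have hcomm := G.dist_comm (u := x) (v := c)
  have hk : 1 ≤ k := by omega
  obtain ⟨a, ha⟩ := hH.exists_forall_dist_le hconn (F := {(x, 1), (y, 1), (c, k - 1)})
    (Set.insert_nonempty _ _) (by
      simp only [Set.forall_mem_insert, Set.mem_singleton_iff, forall_eq]
      refine ⟨⟨?_, ?_, ?_⟩, ⟨?_, ?_, ?_⟩, ⟨?_, ?_, ?_⟩⟩ <;>
        first | omega | (rw [SimpleGraph.dist_comm]; omega) | simp)
  simp only [Set.forall_mem_insert, Set.mem_singleton_iff, forall_eq] at ha
  obtain ⟨hxa, hya, hca⟩ := ha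
  have hyx := hconn.dist_triangle (u := y) (v := a) (w := x)
  rw [dist_comm (u := a), dist_comm (u := y)] at hyx
  refine ⟨a, hconn.adj_of_dist_le_one hxa ?_, hconn.adj_of_dist_le_one hya ?_, by omega⟩ <;>
    rintro rfl <;> simp at hyx <;> omega

end Metric

section Split

variable {G : SimpleGraph V} {C S : Set V}

lemma dist_le_dist_induce {s : Set V} {a b : s} (h : (G.induce s).Reachable a b) :
    G.dist a b ≤ (G.induce s).dist a b := by
  obtain ⟨p, hp⟩ := h.exists_walk_length_eq_dist
  exact (dist_le (p.map (Embedding.induce s).toHom)).trans (by rw [Walk.length_map, hp])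

lemma adj_or_eq_induce_union (hC : G.IsClique C) {a b : ↥(C ∪ S)} (ha : ↑a ∈ C) (hb : ↑b ∈ C) :
    (G.induce (C ∪ S)).Adj a b ∨ a = b := by
  obtain rfl | hne := eq_or_ne a b
  · exact .inr rfl
  · exact .inl (hC ha hb (Subtype.coe_injective.ne hne))

lemma exists_adj_induce_union (hS : ∀ s ∈ S, ∃ c ∈ C, G.Adj s c) {a : ↥(C ∪ S)} (ha : ↑a ∈ S) :
    ∃ c : ↥(C ∪ S), ↑c ∈ C ∧ (G.induce (C ∪ S)).Adj a c := by
  obtain ⟨c, hc, hac⟩ := hS a ha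
  exact ⟨⟨c, .inl hc⟩, hc, hac⟩

lemma connected_induce_union (hC : G.IsClique C) (hS : ∀ s ∈ S, ∃ c ∈ C, G.Adj s c)
    {c₀ : V} (hc₀ : c₀ ∈ C) : (G.induce (C ∪ S)).Connected := by
  have hreach : ∀ a : ↥(C ∪ S), ↑a ∈ C → (G.induce (C ∪ S)).Reachable a ⟨c₀, .inl hc₀⟩ :=
    fun a ha => (adj_or_eq_induce_union hC ha hc₀).elim Adj.reachable (· ▸ .rfl)
  have hreach' : ∀ a : ↥(C ∪ S), (G.induce (C ∪ S)).Reachable a ⟨c₀, .inl hc₀⟩ := by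
    intro a
    obtain ha | ha := a.2
    · exact hreach a ha
    · obtain ⟨c, hc, hac⟩ := exists_adj_induce_union hS ha
      exact hac.reachable.trans (hreach c hc)
  exact (connected_iff _).mpr ⟨fun a b => (hreach' a).trans (hreach' b).symm, ⟨⟨c₀, .inl hc₀⟩⟩⟩

lemma dist_induce_union_le_two (hC : G.IsClique C) (hS : ∀ s ∈ S, ∃ c ∈ C, G.Adj s c)
    {a b : ↥(C ∪ S)} (hb : ↑b ∈ C) : (G.induce (C ∪ S)).dist a b ≤ 2 := by
  have hle_one : ∀ c : ↥(C ∪ S), ↑c ∈ C → (G.induce (C ∪ S)).dist c b ≤ 1 := fun c hc =>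
    ((connected_induce_union hC hS hb).preconnected c b).dist_le_one_iff.mpr
      (adj_or_eq_induce_union hC hc hb)
  obtain ha | ha := a.2
  · exact (hle_one a ha).trans (by norm_num)
  · obtain ⟨c, hc, hac⟩ := exists_adj_induce_union hS ha
    calc (G.induce (C ∪ S)).dist a b
        ≤ (G.induce (C ∪ S)).dist a c + (G.induce (C ∪ S)).dist c b :=
          (connected_induce_union hC hS hb).dist_triangle
      _ ≤ 1 + 1 := add_le_add (dist_eq_one_iff_adj.mpr hac).le (hle_one c hc)

lemma isHelly_induce_union (hconn : G.Connected) (hC : G.IsClique C) {c₀ : V} (hc₀ : c₀ ∈ C)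
    (hS : ∀ s ∈ S, ∃ c ∈ C, G.Adj s c)
    (hcommon : ∀ T ⊆ S, (∀ s ∈ T, ∀ t ∈ T, G.dist s t ≤ 2) → ∃ c ∈ C, ∀ s ∈ T, G.Adj s c) :
    IsHelly (G.induce (C ∪ S)) := by
  set H := G.induce (C ∪ S)
  have hHconn : H.Connected := connected_induce_union hC hS hc₀
  intro F hF hpair
  by_cases hzero : ∃ p ∈ F, p.2 = 0
  · obtain ⟨p, hpF, hp0⟩ := hzero
    refine ⟨p.1, Set.mem_iInter₂.mpr fun q hqF => ?_⟩
    obtain ⟨v, hqv, hpv⟩ := hpair q hqF p hpF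
    change H.dist p.1 v ≤ p.2 at hpv
    have hpv : p.1 = v := hHconn.dist_eq_zero_iff.mp (Nat.le_zero.mp (hp0 ▸ hpv))
    rwa [hpv]
  push Not at hzero
  set T : Set V := {s ∈ S | ∃ p ∈ F, ↑p.1 = s ∧ p.2 = 1}
  obtain ⟨c, hc, hcT⟩ := hcommon T (fun s hs => hs.1) <| by
    rintro _ ⟨-, p, hpF, rfl, hp1⟩ _ ⟨-, q, hqF, rfl, hq1⟩
    obtain ⟨v, hpv, hqv⟩ := hpair p hpF q hqF
    have hpv' := (dist_le_dist_induce (hHconn.preconnected p.1 v)).trans hpv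
    have hqv' := (dist_le_dist_induce (hHconn.preconnected q.1 v)).trans hqv
    have := hconn.dist_triangle (u := ↑p.1) (v := ↑v) (w := ↑q.1)
    rw [dist_comm (u := (v : V))] at this
    omega
  refine ⟨⟨c, .inl hc⟩, Set.mem_iInter₂.mpr fun p hpF => ?_⟩
  have hp := Nat.one_le_iff_ne_zero.mpr (hzero p hpF)
  change H.dist p.1 ⟨c, _⟩ ≤ p.2
  obtain hpC | hpS := p.1.2
  · exact (((hHconn.preconnected _ _).dist_le_one_iff).mpr
      (adj_or_eq_induce_union hC hpC hc)).trans hp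
  · obtain hp1 | hp2 := hp.eq_or_lt
    · have hadj : H.Adj p.1 ⟨c, .inl hc⟩ := hcT _ ⟨hpS, p, hpF, rfl, hp1.symm⟩
      exact (dist_eq_one_iff_adj.mpr hadj).le.trans hp
    · exact (dist_induce_union_le_two hC hS hc).trans hp2

end Split

section Slice

variable {G : SimpleGraph V} {u w x y : V} {k : ℕ}

lemma mem_gslice_iff (hconn : G.Connected) (hd : G.dist u w = 2 * k) :
    x ∈ gslice G u k w ↔ G.dist u x ≤ k ∧ G.dist w x ≤ k := by
  have huxw := hconn.dist_triangle (u := u) (v := x) (w := w)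
  change G.dist u x = k ∧ G.dist u x + G.dist x w = G.dist u w ↔ _
  rw [dist_comm (u := w), hd]
  omega

lemma dist_ne_two_of_mem_gslice (hH : IsHelly G) (hC4 : C4Free G) (hconn : G.Connected)
    (hd : G.dist u w = 2 * k) (hx : x ∈ gslice G u k w) (hy : y ∈ gslice G u k w) :
    G.dist x y ≠ 2 := by
  intro hxy
  rw [mem_gslice_iff hconn hd] at hx hy
  obtain ⟨a, hxa, hya, hua⟩ := hH.exists_adj_adj_dist_lt hconn hxy hx.1 hy.1
  obtain ⟨b, hxb, hyb, hwb⟩ := hH.exists_adj_adj_dist_lt hconn hxy hx.2 hy.2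
  have hab : 2 ≤ G.dist a b := by
    have huab := hconn.dist_triangle (u := u) (v := a) (w := b)
    have hubw := hconn.dist_triangle (u := u) (v := b) (w := w)
    rw [dist_comm (u := b)] at hubw
    omega
  have hne : ∀ {v v' : V}, 2 ≤ G.dist v v' → v ≠ v' ∧ ¬ G.Adj v v' := fun h =>
    ⟨by rintro rfl; simp at h, fun hadj => by rw [dist_eq_one_iff_adj.mpr hadj] at h; omega⟩
  exact hC4 ⟨x, a, y, b, hxa.ne, (hne hxy.ge).1, hxb.ne, hya.ne', (hne hab).1, hyb.ne,
    hxa, hya.symm, hyb, hxb.symm, (hne hxy.ge).2, (hne hab).2⟩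

lemma exists_mem_gslice_dist_add_one_eq (hH : IsHelly G) (hconn : G.Connected)
    (hd : G.dist u w = 2 * k) (hx : x ∈ gslice G u k w) (hy : y ∈ gslice G u k w) (hxy : x ≠ y) :
    ∃ z ∈ gslice G u k w, G.dist x z + 1 = G.dist x y := by
  simp only [mem_gslice_iff hconn hd] at hx hy ⊢
  have hpos := hconn.pos_dist_of_ne hxy
  have hcomm := G.dist_comm (u := x) (v := y)
  obtain ⟨z, hz⟩ := hH.exists_forall_dist_le hconn
    (F := {(x, G.dist x y - 1), (y, 1), (u, k), (w, k)}) (Set.insert_nonempty _ _) (by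
      simp only [Set.forall_mem_insert, Set.mem_singleton_iff, forall_eq]
      refine ⟨⟨?_, ?_, ?_, ?_⟩, ⟨?_, ?_, ?_, ?_⟩, ⟨?_, ?_, ?_, ?_⟩, ⟨?_, ?_, ?_, ?_⟩⟩ <;>
        first | omega | (rw [SimpleGraph.dist_comm]; omega) | simp)
  simp only [Set.forall_mem_insert, Set.mem_singleton_iff, forall_eq] at hz
  obtain ⟨hxz, hyz, huz, hwz⟩ := hz
  have hxzy := hconn.dist_triangle (u := x) (v := z) (w := y)
  rw [dist_comm (u := z)] at hxzy
  exact ⟨z, ⟨huz, hwz⟩, by omega⟩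

lemma isClique_gslice (hH : IsHelly G) (hC4 : C4Free G) (hconn : G.Connected)
    (hd : G.dist u w = 2 * k) : G.IsClique (gslice G u k w) := by
  suffices h : ∀ n, ∀ x ∈ gslice G u k w, ∀ y ∈ gslice G u k w, G.dist x y = n → n ≤ 1 from
    fun x hx y hy hxy => hconn.adj_of_dist_le_one (h _ x hx y hy rfl) hxy
  intro n
  induction n using Nat.strong_induction_on with
  | _ n ih =>
    rintro x hx y hy rfl
    by_contra! hxy
    have h2 := dist_ne_two_of_mem_gslice hH hC4 hconn hd hx hy
    obtain ⟨z, hz, hxz⟩ := exists_mem_gslice_dist_add_one_eq hH hconn hd hx hy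
      (by rintro rfl; simp at hxy)
    have := ih _ (by omega) x hx z hz rfl
    omega

lemma gslice_nonempty (hconn : G.Connected) (hd : G.dist u w = 2 * k) :
    (gslice G u k w).Nonempty := by
  obtain ⟨c, huc, hcw⟩ := hconn.exists_dist_le_and_dist_le_sub u w k
  refine ⟨c, (mem_gslice_iff hconn hd).mpr ⟨huc, ?_⟩⟩
  rw [dist_comm]
  omega

lemma exists_mem_gslice_forall_adj (hH : IsHelly G) (hconn : G.Connected)
    (hd : G.dist u w = 2 * k) {T : Set V} (hT : T ⊆ nbhdSet G (gslice G u k w))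
    (hpair : ∀ s ∈ T, ∀ t ∈ T, G.dist s t ≤ 2) :
    ∃ c ∈ gslice G u k w, ∀ s ∈ T, G.Adj s c := by
  have hTuw : ∀ s ∈ T, G.dist s u ≤ k + 1 ∧ G.dist s w ≤ k + 1 := by
    intro s hs
    obtain ⟨-, c, hc, hsc⟩ := hT hs
    rw [mem_gslice_iff hconn hd] at hc
    have hsu := hconn.dist_triangle (u := s) (v := c) (w := u)
    have hsw := hconn.dist_triangle (u := s) (v := c) (w := w)
    rw [dist_eq_one_iff_adj.mpr hsc, dist_comm (u := c)] at hsu hsw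
    omega
  obtain ⟨z, hz⟩ := hH.exists_forall_dist_le hconn
    (F := (fun s => (s, 1)) '' T ∪ {(u, k), (w, k)}) ⟨(u, k), .inr (.inl rfl)⟩ (by
      simp only [Set.mem_union, or_imp, forall_and, Set.forall_mem_image, Set.forall_mem_insert,
        Set.mem_singleton_iff, forall_eq]
      refine ⟨⟨hpair, fun s hs => ?_, fun s hs => ?_⟩, ⟨fun s hs => ?_, by simp, ?_⟩,
        fun s hs => ?_, by omega, by simp⟩
      · exact dist_comm (u := u) ▸ (hTuw s hs).1
      · exact dist_comm (u := w) ▸ (hTuw s hs).2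
      · exact add_comm k 1 ▸ (hTuw s hs).1
      · rw [dist_comm]; omega
      · exact add_comm k 1 ▸ (hTuw s hs).2)
  simp only [Set.mem_union, or_imp, forall_and, Set.forall_mem_image, Set.forall_mem_insert,
    Set.mem_singleton_iff, forall_eq] at hz
  obtain ⟨hTz, huz, hwz⟩ := hz
  have hz : z ∈ gslice G u k w := (mem_gslice_iff hconn hd).mpr ⟨huz, hwz⟩
  exact ⟨z, hz, fun s hs => hconn.adj_of_dist_le_one (hTz hs) fun hsz => (hT hs).1 (hsz ▸ hz)⟩

end Slice

theorem stmt10_general (G : SimpleGraph V) (hconn : G.Connected) (hH : IsHelly G)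
    (hC4 : C4Free G) (u w : V) (r : ℕ) (hd : G.dist u w = 2 * r - 2)
    (S : Set V) (hS : S ⊆ nbhdSet G (gslice G u (r - 1) w)) :
    Disjoint (gslice G u (r - 1) w) S ∧
    G.IsClique (gslice G u (r - 1) w) ∧
    IsHelly (G.induce (gslice G u (r - 1) w ∪ S)) := by
  have hdk : G.dist u w = 2 * (r - 1) := by omega
  have hC := isClique_gslice hH hC4 hconn hdk
  obtain ⟨c₀, hc₀⟩ := gslice_nonempty hconn hdk
  refine ⟨Set.disjoint_right.mpr fun x hxS => (hS hxS).1, hC, ?_⟩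
  exact isHelly_induce_union hconn hC hc₀ (fun s hs => (hS hs).2)
    fun T hT hpair => exists_mem_gslice_forall_adj hH hconn hdk (hT.trans hS) hpair

/-- In a finite connected C4-free Helly graph, if `dist(u,w) = 2r − 2`,
`C = L(u, r−1, w)` and `S ⊆ N(C)` is a stable set, then the induced subgraph
`H = G[C ∪ S]` is a split Helly graph: its vertex set partitions into the clique
`C` and the stable set `S`, and `H` is Helly. -/
theorem stmt10 (G : SimpleGraph V) [Fintype V] (hconn : G.Connected) (hH : IsHelly G)
    (hC4 : C4Free G) (u w : V) (r : ℕ) (hr : 1 ≤ r) (hd : G.dist u w = 2 * r - 2)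
    (S : Set V) (hS : S ⊆ nbhdSet G (gslice G u (r - 1) w))
    (hstable : ∀ x ∈ S, ∀ y ∈ S, ¬ G.Adj x y) :
    Disjoint (gslice G u (r - 1) w) S ∧
    G.IsClique (gslice G u (r - 1) w) ∧
    IsHelly (G.induce (gslice G u (r - 1) w ∪ S)) :=
  stmt10_general G hconn hH hC4 u w r hd S hS
end

section
/- Let G be a finite connected Helly graph, let A be a nonempty set of vertices, and let k ≥ 1 be an integer. If the intersection V' = ⋂_{a∈A} N^{k−1}[a] is nonempty, then ⋂_{a∈A} N^{k}[a] = N[V'], where N[V'] = ⋃_{v∈V'} N[v] is the set of vertices at distance at most 1 from V'. -/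
open SimpleGraph

variable {V : Type*}

/-
Proof idea: the inclusion `N[V'] ⊆ ⋂ N^k[a]` is the triangle inequality. Conversely, if `u` lies
in every `N^k[a]`, then a geodesic from `a` to `u` passes within `k - 1` of `a` and within `1` of
`u`, so the ball `N[u]` meets every ball `N^{k-1}[a]`; these balls also meet pairwise, as they
share `V'`, and the Helly property yields a vertex of `V'` adjacent or equal to `u`.
-/

section Balls

variable {G : SimpleGraph V}

lemma mem_gBall_self (v : V) (r : ℕ) : v ∈ gBall G v r := by
  simp [gBall]

lemma SimpleGraph.Reachable.mem_gBall_add {a v u : V} {r s : ℕ} (hav : G.Reachable a v)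
    (hv : v ∈ gBall G a r) (hu : u ∈ gBall G v s) : u ∈ gBall G a (r + s) :=
  (hav.dist_triangle_left u).trans (Nat.add_le_add hv hu)

lemma SimpleGraph.Reachable.gBall_inter_gBall_nonempty {a u : V} {r s : ℕ}
    (hau : G.Reachable a u) (h : G.dist a u ≤ r + s) : (gBall G a r ∩ gBall G u s).Nonempty := by
  obtain ⟨p, hp⟩ := hau.exists_walk_length_eq_dist
  refine ⟨p.getVert r, ?_, ?_⟩
  · calc G.dist a (p.getVert r) ≤ (p.take r).length := dist_le _
      _ ≤ r := by simp
  · show G.dist u (p.getVert r) ≤ s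
    calc G.dist u (p.getVert r) = G.dist (p.getVert r) u := dist_comm
      _ ≤ (p.drop r).length := dist_le _
      _ ≤ s := by rw [Walk.drop_length]; omega

lemma IsHelly.biInter_gBall_inter_gBall_nonempty (hH : IsHelly G)
    {A : Set V} {r : ℕ} (u : V) (s : ℕ) (hA : (⋂ a ∈ A, gBall G a r).Nonempty)
    (hu : ∀ a ∈ A, (gBall G a r ∩ gBall G u s).Nonempty) :
    ((⋂ a ∈ A, gBall G a r) ∩ gBall G u s).Nonempty := by
  obtain ⟨x, hx⟩ := hA
  rw [Set.mem_iInter₂] at hx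
  have hpair : ∀ p ∈ insert (u, s) ((·, r) '' A), ∀ q ∈ insert (u, s) ((·, r) '' A),
      (gBall G p.1 p.2 ∩ gBall G q.1 q.2).Nonempty := by
    rintro p (rfl | ⟨a, ha, rfl⟩) q (rfl | ⟨b, hb, rfl⟩)
    · exact ⟨u, mem_gBall_self u s, mem_gBall_self u s⟩
    · exact Set.inter_comm _ _ ▸ hu b hb
    · exact hu a ha
    · exact ⟨x, hx a ha, hx b hb⟩
  obtain ⟨w, hw⟩ := hH _ (Set.insert_nonempty _ _) hpair
  rw [Set.mem_iInter₂] at hw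
  exact ⟨w, Set.mem_iInter₂.mpr fun a ha => hw (a, r) (Or.inr ⟨a, ha, rfl⟩),
    hw (u, s) (Or.inl rfl)⟩

end Balls

theorem stmt17_general (G : SimpleGraph V) (hconn : G.Connected) (hH : IsHelly G)
    (A : Set V) (k : ℕ) (hk : 1 ≤ k)
    (hne : (⋂ a ∈ A, gBall G a (k - 1)).Nonempty) :
    (⋂ a ∈ A, gBall G a k) = ⋃ v ∈ (⋂ a ∈ A, gBall G a (k - 1)), gBall G v 1 := by
  have hk' : k - 1 + 1 = k := Nat.sub_add_cancel hk
  ext u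
  simp only [Set.mem_iUnion, Set.mem_iInter₂, exists_prop]
  constructor
  · intro hu
    obtain ⟨w, hw, hwu⟩ := hH.biInter_gBall_inter_gBall_nonempty u 1 hne fun a ha =>
      (hconn.preconnected a u).gBall_inter_gBall_nonempty (hk' ▸ hu a ha)
    exact ⟨w, Set.mem_iInter₂.mp hw, dist_comm.trans_le hwu⟩
  · rintro ⟨v, hv, hvu⟩ a ha
    exact hk' ▸ (hconn.preconnected a v).mem_gBall_add (hv a ha) hvu

/-- In a finite connected Helly graph, for a nonempty vertex set `A`
and `k ≥ 1`, if `V' = ⋂_{a∈A} N^{k−1}[a]` is nonempty then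
`⋂_{a∈A} N^{k}[a] = N[V']`. -/
theorem stmt17 (G : SimpleGraph V) [Fintype V] (hconn : G.Connected) (hH : IsHelly G)
    (A : Set V) (hA : A.Nonempty) (k : ℕ) (hk : 1 ≤ k)
    (hne : (⋂ a ∈ A, gBall G a (k - 1)).Nonempty) :
    (⋂ a ∈ A, gBall G a k) = ⋃ v ∈ (⋂ a ∈ A, gBall G a (k - 1)), gBall G v 1 :=
  stmt17_general G hconn hH A k hk hne
end
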